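/- arXiv:2509.21454 — 8 statements merged into one kernel-verified Lean document; each statement's English description precedes it below -/
import Mathlib

section
/- Let χ : ℤ² × ℤ² → ℤ be the bilinear form χ((a,b),(c,d)) = −ac − ad − bd (the form with Gram matrix [[−1,−1],[0,−1]] in the standard basis e₁ = (1,0), e₂ = (0,1)). Then the additive map s : ℤ² → ℤ² defined by s(a,b) = (−b, a+b) (so s(e₁) = e₂ and s(e₂) = e₂ − e₁) satisfies χ(x, s y) = χ(y, x) for all x, y ∈ ℤ², and s is the unique additive endomorphism of ℤ² with this property. -/
/-- The Euler pairing on `ℤ²` with Gram matrix `[[−1,−1],[0,−1]]` in the standard basis. -/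
def chi (x y : ℤ × ℤ) : ℤ := -(x.1 * y.1) - x.1 * y.2 - x.2 * y.2

/-- The Serre operator `s(a,b) = (−b, a+b)`. -/
def serre (p : ℤ × ℤ) : ℤ × ℤ := (-p.2, p.1 + p.2)

theorem stmt0 :
    (∀ x y : ℤ × ℤ, chi x (serre y) = chi y x) ∧
    (∀ f : (ℤ × ℤ) →+ (ℤ × ℤ),
      (∀ x y : ℤ × ℤ, chi x (f y) = chi y x) → ∀ v : ℤ × ℤ, f v = serre v) := by
  constructor
  · intro x y
    simp only [chi, serre]
    ring
  · intro f h v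
    have h1 := h ((1 : ℤ), (0 : ℤ)) v
    have h2 := h ((0 : ℤ), (1 : ℤ)) v
    simp only [chi, serre] at h1 h2 ⊢
    have hv2 : (f v).2 = v.1 + v.2 := by linarith
    have hv1 : (f v).1 = -v.2 := by linarith
    exact Prod.ext hv1 hv2
end

section
/- In the polynomial ring ℚ[t], define td = 1 + 2t + (25/12)t² + (3/2)t³ + (73/90)t⁴ + (1/3)t⁵, c₁ = 3 − t − (1/2)t² + (1/6)t³ + (1/8)t⁴ − (13/360)t⁵, and c₂ = t − (1/2)t² − (1/6)t³ + (1/8)t⁴ + (13/360)t⁵, and for a polynomial p let p∨ denote the polynomial obtained from p by negating the coefficients in odd degrees. Then, writing [t⁵]q for the coefficient of t⁵ in q: 3·[t⁵](c₁∨ · c₁ · td) = −1, 3·[t⁵](c₁∨ · c₂ · td) = −1, 3·[t⁵](c₂∨ · c₁ · td) = 0, and 3·[t⁵](c₂∨ · c₂ · td) = −1. -/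
open Polynomial

/-- Todd class polynomial `td = 1 + 2t + (25/12)t² + (3/2)t³ + (73/90)t⁴ + (1/3)t⁵`. -/
noncomputable def tdPoly : ℚ[X] :=
  1 + C 2 * X + C (25/12) * X ^ 2 + C (3/2) * X ^ 3 + C (73/90) * X ^ 4 + C (1/3) * X ^ 5

/-- Chern character `c₁ = 3 − t − (1/2)t² + (1/6)t³ + (1/8)t⁴ − (13/360)t⁵`. -/
noncomputable def chOne : ℚ[X] :=
  C 3 - X - C (1/2) * X ^ 2 + C (1/6) * X ^ 3 + C (1/8) * X ^ 4 - C (13/360) * X ^ 5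

/-- Chern character `c₂ = t − (1/2)t² − (1/6)t³ + (1/8)t⁴ + (13/360)t⁵`. -/
noncomputable def chTwo : ℚ[X] :=
  X - C (1/2) * X ^ 2 - C (1/6) * X ^ 3 + C (1/8) * X ^ 4 + C (13/360) * X ^ 5

/-- The dual `p∨`, negating coefficients in odd degrees, i.e. `p(−t)`. -/
noncomputable def dualPoly (p : ℚ[X]) : ℚ[X] := p.comp (-X)

lemma coeffMul0 (p q : ℚ[X]) : (p * q).coeff 0 = p.coeff 0 * q.coeff 0 := by
  rw [coeff_mul, Finset.Nat.sum_antidiagonal_eq_sum_range_succ_mk]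
  simp [Finset.sum_range_succ]

lemma coeffMul1 (p q : ℚ[X]) : (p * q).coeff 1 = p.coeff 0 * q.coeff 1 + p.coeff 1 * q.coeff 0 := by
  rw [coeff_mul, Finset.Nat.sum_antidiagonal_eq_sum_range_succ_mk]
  simp [Finset.sum_range_succ]

lemma coeffMul2 (p q : ℚ[X]) : (p * q).coeff 2 = p.coeff 0 * q.coeff 2 + p.coeff 1 * q.coeff 1 + p.coeff 2 * q.coeff 0 := by
  rw [coeff_mul, Finset.Nat.sum_antidiagonal_eq_sum_range_succ_mk]
  simp [Finset.sum_range_succ]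

lemma coeffMul3 (p q : ℚ[X]) : (p * q).coeff 3 = p.coeff 0 * q.coeff 3 + p.coeff 1 * q.coeff 2 + p.coeff 2 * q.coeff 1 + p.coeff 3 * q.coeff 0 := by
  rw [coeff_mul, Finset.Nat.sum_antidiagonal_eq_sum_range_succ_mk]
  simp [Finset.sum_range_succ]

lemma coeffMul4 (p q : ℚ[X]) : (p * q).coeff 4 = p.coeff 0 * q.coeff 4 + p.coeff 1 * q.coeff 3 + p.coeff 2 * q.coeff 2 + p.coeff 3 * q.coeff 1 + p.coeff 4 * q.coeff 0 := by
  rw [coeff_mul, Finset.Nat.sum_antidiagonal_eq_sum_range_succ_mk]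
  simp [Finset.sum_range_succ]

lemma coeffMul5 (p q : ℚ[X]) : (p * q).coeff 5 = p.coeff 0 * q.coeff 5 + p.coeff 1 * q.coeff 4 + p.coeff 2 * q.coeff 3 + p.coeff 3 * q.coeff 2 + p.coeff 4 * q.coeff 1 + p.coeff 5 * q.coeff 0 := by
  rw [coeff_mul, Finset.Nat.sum_antidiagonal_eq_sum_range_succ_mk]
  simp [Finset.sum_range_succ]

lemma d1 : dualPoly chOne =
    C 3 + X - C (1/2) * X ^ 2 - C (1/6) * X ^ 3 + C (1/8) * X ^ 4 + C (13/360) * X ^ 5 := by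
  simp only [dualPoly, chOne, add_comp, sub_comp, mul_comp, pow_comp, X_comp, C_comp]
  ring

lemma d2 : dualPoly chTwo =
    -X - C (1/2) * X ^ 2 + C (1/6) * X ^ 3 + C (1/8) * X ^ 4 - C (13/360) * X ^ 5 := by
  simp only [dualPoly, chTwo, add_comp, sub_comp, mul_comp, pow_comp, X_comp, C_comp]
  ring

set_option maxHeartbeats 1000000 in
theorem stmt5 :
    3 * (dualPoly chOne * chOne * tdPoly).coeff 5 = -1 ∧
    3 * (dualPoly chOne * chTwo * tdPoly).coeff 5 = -1 ∧
    3 * (dualPoly chTwo * chOne * tdPoly).coeff 5 = 0 ∧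
    3 * (dualPoly chTwo * chTwo * tdPoly).coeff 5 = -1 := by
  refine ⟨?_, ?_, ?_, ?_⟩ <;>
  · simp only [d1, d2]
    rw [coeffMul5]
    rw [coeffMul0, coeffMul1, coeffMul2, coeffMul3, coeffMul4, coeffMul5]
    simp only [chOne, chTwo, tdPoly, coeff_add, coeff_sub, coeff_neg, coeff_C_mul,
      coeff_X_pow, coeff_X, coeff_one, coeff_C]
    norm_num
end

section
/- For d ∈ ℤ set e(d) = (d+1)(d+2)(d+3)/6, and define χC : ℤ → ℤ by χC(2j) = e(j) + 3e(j−1) + 3e(j−2) + e(j−3) and χC(2j+1) = 3e(j) + 2e(j−1) + 3e(j−2) for j ∈ ℤ. Then the 4×4 integer matrix (χC(j−i)) with i, j ranging over (−1, 0, 1, 2) equals [[1,3,7,14],[0,1,3,7],[−1,0,1,3],[−3,−1,0,1]], and this matrix has determinant 1. -/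
/-- `e(d) = (d+1)(d+2)(d+3)/6`, the Euler characteristic `χ(ℙ³, O(d))`. -/
def eul (d : ℤ) : ℤ := ((d + 1) * (d + 2) * (d + 3)) / 6

/-- The index vector `(−1, 0, 1, 2)`. -/
def idx : Fin 4 → ℤ := ![-1, 0, 1, 2]

theorem stmt6 (χC : ℤ → ℤ)
    (heven : ∀ j : ℤ, χC (2 * j) = eul j + 3 * eul (j - 1) + 3 * eul (j - 2) + eul (j - 3))
    (hodd : ∀ j : ℤ, χC (2 * j + 1) = 3 * eul j + 2 * eul (j - 1) + 3 * eul (j - 2)) :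
    (Matrix.of fun i j : Fin 4 => χC (idx j - idx i)) =
      !![1, 3, 7, 14; 0, 1, 3, 7; -1, 0, 1, 3; -3, -1, 0, 1] ∧
    (Matrix.of fun i j : Fin 4 => χC (idx j - idx i)).det = 1 := by
  have h0 : χC 0 = 1 := by have := heven 0; norm_num [eul] at this; exact this
  have h1 : χC 1 = 3 := by have := hodd 0; norm_num [eul] at this; exact this
  have h2 : χC 2 = 7 := by have := heven 1; norm_num [eul] at this; exact this
  have h3 : χC 3 = 14 := by have := hodd 1; norm_num [eul] at this; exact this
  have hm1 : χC (-1) = 0 := by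
    have := hodd (-1); norm_num [eul] at this; exact this
  have hm2 : χC (-2) = -1 := by
    have := heven (-1); norm_num [eul] at this; exact this
  have hm3 : χC (-3) = -3 := by
    have := hodd (-2); norm_num [eul] at this; exact this
  have hM : (Matrix.of fun i j : Fin 4 => χC (idx j - idx i)) =
      !![1, 3, 7, 14; 0, 1, 3, 7; -1, 0, 1, 3; -3, -1, 0, 1] := by
    ext i j
    fin_cases i <;> fin_cases j <;>
      simp_all [idx]
  refine ⟨hM, ?_⟩
  rw [hM]
  decide
end

section
/- Let M = [[1,3,7,14],[0,1,3,7],[−1,0,1,3],[−3,−1,0,1]] and define the bilinear form χ(x, y) = xᵀ M y on ℤ⁴, with standard basis vectors f₋₁, f₀, f₁, f₂ (indexing the rows/columns by −1, 0, 1, 2). Then the subgroup {v ∈ ℤ⁴ : χ(f₁, v) = 0 and χ(f₂, v) = 0} is free of rank 2 with ℤ-basis κ̄₁ = (0, 1, −3, 1) and κ̄₂ = (−1, 4, −4, 1); moreover χ(κ̄₁, κ̄₁) = −1, χ(κ̄₁, κ̄₂) = −1, χ(κ̄₂, κ̄₁) = 0, and χ(κ̄₂, κ̄₂) = −1. -/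
open Matrix

/-- The Euler pairing matrix of `(C₋₁, C₀, C₁, C₂)`. -/
def M7 : Matrix (Fin 4) (Fin 4) ℤ :=
  !![1, 3, 7, 14; 0, 1, 3, 7; -1, 0, 1, 3; -3, -1, 0, 1]

/-- The bilinear form `χ(x, y) = xᵀ M y` on `ℤ⁴`. -/
def chi7 (x y : Fin 4 → ℤ) : ℤ := x ⬝ᵥ (M7 *ᵥ y)

/-- `f₁`, the standard basis vector corresponding to index `1` (third coordinate). -/
def fOne : Fin 4 → ℤ := Pi.single 2 1

/-- `f₂`, the standard basis vector corresponding to index `2` (fourth coordinate). -/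
def fTwo : Fin 4 → ℤ := Pi.single 3 1

/-- `κ̄₁ = (0, 1, −3, 1)`. -/
def kbar1 : Fin 4 → ℤ := ![0, 1, -3, 1]

/-- `κ̄₂ = (−1, 4, −4, 1)`. -/
def kbar2 : Fin 4 → ℤ := ![-1, 4, -4, 1]

lemma chi7_fOne (v : Fin 4 → ℤ) : chi7 fOne v = -v 0 + v 2 + 3 * v 3 := by
  simp [chi7, fOne, M7, mulVec, dotProduct, Fin.sum_univ_four, Pi.single_apply]

lemma chi7_fTwo (v : Fin 4 → ℤ) : chi7 fTwo v = -(3 * v 0) + -v 1 + v 3 := by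
  simp [chi7, fTwo, M7, mulVec, dotProduct, Fin.sum_univ_four, Pi.single_apply]

lemma exu7 (v : Fin 4 → ℤ) (h1 : chi7 fOne v = 0) (h2 : chi7 fTwo v = 0) :
    ∃! p : ℤ × ℤ, v = p.1 • kbar1 + p.2 • kbar2 := by
  rw [chi7_fOne] at h1
  rw [chi7_fTwo] at h2
  refine ⟨(v 1 + 4 * v 0, -v 0), ?_, ?_⟩
  · funext i
    fin_cases i <;> simp [kbar1, kbar2] <;> linarith
  · rintro ⟨a, b⟩ hp
    have h0 := congrFun hp 0
    have h1' := congrFun hp 1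
    simp [kbar1, kbar2] at h0 h1'
    simp only [Prod.mk.injEq]
    constructor <;> linarith

theorem stmt7 :
    (chi7 fOne kbar1 = 0 ∧ chi7 fTwo kbar1 = 0) ∧
    (chi7 fOne kbar2 = 0 ∧ chi7 fTwo kbar2 = 0) ∧
    (∀ v : Fin 4 → ℤ, chi7 fOne v = 0 → chi7 fTwo v = 0 →
      ∃! p : ℤ × ℤ, v = p.1 • kbar1 + p.2 • kbar2) ∧
    chi7 kbar1 kbar1 = -1 ∧ chi7 kbar1 kbar2 = -1 ∧
    chi7 kbar2 kbar1 = 0 ∧ chi7 kbar2 kbar2 = -1 := by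
  refine ⟨⟨?_, ?_⟩, ⟨?_, ?_⟩, exu7, ?_, ?_, ?_, ?_⟩ <;>
    simp [chi7, fOne, fTwo, kbar1, kbar2, M7, mulVec, dotProduct,
      Fin.sum_univ_four, Pi.single_apply]
end

section
/- Let β ∈ ℝ with −3/2 < β < −1 and let α ∈ ℝ with 0 < α, α < β + 3/2 and α < −1 − β. For j ∈ ℤ define ν(j) = ((2β − j + 3)² − 4α²)/(4j − 8β − 12). Then ν(−1) < ν(0) < 0 < ν(1) < ν(2). -/
/-- The tilt slope `ν_{α,β}(C_j) = ((2β − j + 3)² − 4α²)/(4j − 8β − 12)`. -/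
noncomputable def tilt (α β : ℝ) (j : ℤ) : ℝ :=
  ((2 * β - (j : ℝ) + 3) ^ 2 - 4 * α ^ 2) / (4 * (j : ℝ) - 8 * β - 12)

lemma div_lt_div_iff_neg' {a b c d : ℝ} (hb : b < 0) (hd : d < 0) :
    a / b < c / d ↔ a * d < c * b := by
  rw [← neg_div_neg_eq a b, ← neg_div_neg_eq c d,
    div_lt_div_iff₀ (by linarith) (by linarith)]
  constructor <;> intro h <;> nlinarith

theorem stmt10 (α β : ℝ) (hβ1 : -(3/2) < β) (hβ2 : β < -1)
    (hα0 : 0 < α) (hα1 : α < β + 3/2) (hα2 : α < -1 - β) :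
    tilt α β (-1) < tilt α β 0 ∧ tilt α β 0 < 0 ∧
      0 < tilt α β 1 ∧ tilt α β 1 < tilt α β 2 := by
  unfold tilt
  push_cast
  refine ⟨?_, ?_, ?_, ?_⟩
  · rw [div_lt_div_iff_neg' (by linarith) (by linarith)]
    nlinarith [sq_nonneg α, sq_nonneg (α + β + 1), sq_nonneg (α - β - 1), mul_pos hα0 hα0]
  · apply div_neg_of_pos_of_neg
    · nlinarith
    · linarith
  · apply div_pos
    · nlinarith
    · linarith
  · rw [div_lt_div_iff₀ (by linarith) (by linarith)]
    nlinarith [sq_nonneg α, sq_nonneg (α + β + 1), sq_nonneg (α - β - 1), mul_pos hα0 hα0]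
end

section
/- Define s : ℤ² → ℤ² by s(a,b) = (−b, a+b), and let Z : ℤ² → ℂ be the unique additive map with Z(1,0) = exp(2πi/3) and Z(0,1) = −1. Then Z(s(v)) = exp(iπ/3) · Z(v) for every v ∈ ℤ². Moreover, for every real α > 0, the ℝ-linear map T : ℂ → ℂ sending x + iy to x/4 + i·(2√3/(16α² + 7))·y is orientation-preserving and satisfies T(−2 + (4α² + 7/4)·i) = exp(2πi/3) and T(−4) = −1. -/
lemma exp_pi_third : Complex.exp ((Real.pi : ℂ) * Complex.I / 3)
    = (1/2 : ℂ) + (Real.sqrt 3 / 2 : ℝ) * Complex.I := by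
  have h : ((Real.pi : ℂ) * Complex.I / 3) = ((Real.pi / 3 : ℝ) : ℂ) * Complex.I := by
    push_cast; ring
  rw [h, Complex.exp_mul_I, ← Complex.ofReal_cos, ← Complex.ofReal_sin,
    Real.cos_pi_div_three, Real.sin_pi_div_three]
  push_cast; ring

lemma exp_two_pi_third : Complex.exp (2 * (Real.pi : ℂ) * Complex.I / 3)
    = (-1/2 : ℂ) + (Real.sqrt 3 / 2 : ℝ) * Complex.I := by
  have h : (2 * (Real.pi : ℂ) * Complex.I / 3) = ((2 * Real.pi / 3 : ℝ) : ℂ) * Complex.I := by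
    push_cast; ring
  have hc : Real.cos (2 * Real.pi / 3) = -(1/2) := by
    have : (2 : ℝ) * Real.pi / 3 = Real.pi - Real.pi / 3 := by ring
    rw [this, Real.cos_pi_sub, Real.cos_pi_div_three]
  have hs : Real.sin (2 * Real.pi / 3) = Real.sqrt 3 / 2 := by
    have : (2 : ℝ) * Real.pi / 3 = Real.pi - Real.pi / 3 := by ring
    rw [this, Real.sin_pi_sub, Real.sin_pi_div_three]
  rw [h, Complex.exp_mul_I, ← Complex.ofReal_cos, ← Complex.ofReal_sin, hc, hs]
  push_cast; ring

theorem stmt13 :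
    (∀ Z : (ℤ × ℤ) →+ ℂ,
      Z (1, 0) = Complex.exp (2 * (Real.pi : ℂ) * Complex.I / 3) →
      Z (0, 1) = -1 →
      ∀ v : ℤ × ℤ, Z (serre v) = Complex.exp ((Real.pi : ℂ) * Complex.I / 3) * Z v) ∧
    (∀ α : ℝ, 0 < α →
      ∀ T : ℂ → ℂ,
        (∀ z : ℂ, T z = ((z.re / 4 : ℝ) : ℂ) +
            ((2 * Real.sqrt 3 / (16 * α ^ 2 + 7) * z.im : ℝ) : ℂ) * Complex.I) →
        0 < (T 1).re * (T Complex.I).im - (T 1).im * (T Complex.I).re ∧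
        T ((-2 : ℂ) + ((4 * α ^ 2 + 7/4 : ℝ) : ℂ) * Complex.I) =
          Complex.exp (2 * (Real.pi : ℂ) * Complex.I / 3) ∧
        T (-4) = -1) := by
  constructor
  · intro Z h1 h0 v
    obtain ⟨a, b⟩ := v
    have hv : ∀ x y : ℤ, Z (x, y) = (x : ℂ) * Z (1, 0) + (y : ℂ) * Z (0, 1) := by
      intro x y
      have : (x, y) = x • ((1, 0) : ℤ × ℤ) + y • ((0, 1) : ℤ × ℤ) := by
        simp [Prod.ext_iff]
      rw [this, map_add, map_zsmul, map_zsmul, zsmul_eq_mul, zsmul_eq_mul]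
    show Z (-b, a + b) = _
    rw [hv (-b) (a + b), hv a b, h1, h0, exp_pi_third, exp_two_pi_third]
    have h3 : (Real.sqrt 3 : ℂ) ^ 2 = 3 := by
      norm_cast
      exact Real.sq_sqrt (by norm_num)
    push_cast
    linear_combination (-(a:ℂ)/4 * Complex.I^2) * h3 + (-(3:ℂ)*a/4) * Complex.I_sq
  · intro α hα T hT
    have hd : (16 * α ^ 2 + 7 : ℝ) > 0 := by positivity
    have hd' : (16 * α ^ 2 + 7 : ℝ) ≠ 0 := ne_of_gt hd
    refine ⟨?_, ?_, ?_⟩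
    · rw [hT 1, hT Complex.I]
      simp only [Complex.one_re, Complex.one_im, Complex.I_re, Complex.I_im,
        Complex.add_re, Complex.add_im, Complex.mul_re, Complex.mul_im,
        Complex.ofReal_re, Complex.ofReal_im]
      ring_nf
      positivity
    · rw [hT, exp_two_pi_third]
      set r : ℝ := 4 * α ^ 2 + 7/4 with hr
      have hre : ((-2 : ℂ) + (r : ℂ) * Complex.I).re = -2 := by simp
      have him : ((-2 : ℂ) + (r : ℂ) * Complex.I).im = r := by simp
      rw [hre, him, hr]
      have : (2 * Real.sqrt 3 / (16 * α ^ 2 + 7) * (4 * α ^ 2 + 7/4) : ℝ)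
          = Real.sqrt 3 / 2 := by
        field_simp
        ring
      rw [this]
      norm_num
    · rw [hT]
      have : ((-4 : ℂ)).re = -4 := by simp
      rw [this]
      simp
end

section
/- Let (a, b) ∈ ℤ² with gcd(a, b) = 1 and a² + b² ≥ 2. Then there exists a unique pair (c, d) ∈ ℤ² such that a·d − b·c = 1, c² + d² < a² + b², and (a − c)² + (b − d)² < a² + b². -/
theorem stmt14 (a b : ℤ) (hgcd : Int.gcd a b = 1) (hnorm : 2 ≤ a ^ 2 + b ^ 2) :
    ∃! p : ℤ × ℤ, a * p.2 - b * p.1 = 1 ∧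
      p.1 ^ 2 + p.2 ^ 2 < a ^ 2 + b ^ 2 ∧
      (a - p.1) ^ 2 + (b - p.2) ^ 2 < a ^ 2 + b ^ 2 := by
  have hNpos : (0:ℤ) < a ^ 2 + b ^ 2 := by linarith
  have hco : IsCoprime a b := Int.isCoprime_iff_gcd_eq_one.mpr hgcd
  have ha : a ≠ 0 := by
    rintro rfl
    have h1 : b.natAbs = 1 := by simpa using hgcd
    have hb : b = 1 ∨ b = -1 := Int.natAbs_eq_iff.mp h1
    rcases hb with rfl | rfl <;> norm_num at hnorm
  -- key claim: a satisfying pair forces 0 < a*c+b*d < N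
  have key : ∀ c d : ℤ, a * d - b * c = 1 →
      c ^ 2 + d ^ 2 < a ^ 2 + b ^ 2 →
      (a - c) ^ 2 + (b - d) ^ 2 < a ^ 2 + b ^ 2 →
      0 < a * c + b * d ∧ a * c + b * d < a ^ 2 + b ^ 2 := by
    intro c d hu h1 h2
    have lag1 : (a ^ 2 + b ^ 2) * (c ^ 2 + d ^ 2) = (a * c + b * d) ^ 2 + 1 := by
      linear_combination (a * d - b * c + 1) * hu
    have lag2 : (a ^ 2 + b ^ 2) * ((a - c) ^ 2 + (b - d) ^ 2)
        = ((a ^ 2 + b ^ 2) - (a * c + b * d)) ^ 2 + 1 := by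
      linear_combination (a * d - b * c + 1) * hu
    have hm1 : (a ^ 2 + b ^ 2) * (c ^ 2 + d ^ 2) ≤ (a ^ 2 + b ^ 2) * (a ^ 2 + b ^ 2 - 1) :=
      mul_le_mul_of_nonneg_left (by omega) hNpos.le
    have hm2 : (a ^ 2 + b ^ 2) * ((a - c) ^ 2 + (b - d) ^ 2)
        ≤ (a ^ 2 + b ^ 2) * (a ^ 2 + b ^ 2 - 1) :=
      mul_le_mul_of_nonneg_left (by omega) hNpos.le
    constructor
    · nlinarith [lag2, hm2]
    · nlinarith [lag1, hm1]
  -- existence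
  have hbez : a * Int.gcdA a b + b * Int.gcdB a b = 1 := by
    have := Int.gcd_eq_gcd_ab a b
    rw [hgcd] at this
    exact_mod_cast this.symm
  obtain ⟨c, d, hu, hkr⟩ : ∃ c d : ℤ, a * d - b * c = 1 ∧
      a * c + b * d =
        (a * (-Int.gcdB a b) + b * Int.gcdA a b) % (a ^ 2 + b ^ 2) := by
    refine ⟨-Int.gcdB a b
        - ((a * (-Int.gcdB a b) + b * Int.gcdA a b) / (a ^ 2 + b ^ 2)) * a,
        Int.gcdA a b
        - ((a * (-Int.gcdB a b) + b * Int.gcdA a b) / (a ^ 2 + b ^ 2)) * b,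
        ?_, ?_⟩
    · linear_combination hbez
    · rw [Int.emod_def]; ring
  set r : ℤ := (a * (-Int.gcdB a b) + b * Int.gcdA a b) % (a ^ 2 + b ^ 2) with hrdef
  have hr0 : 0 ≤ r := Int.emod_nonneg _ hNpos.ne'
  have hrN : r < a ^ 2 + b ^ 2 := Int.emod_lt_of_pos _ hNpos
  have lag : (a ^ 2 + b ^ 2) * (c ^ 2 + d ^ 2) = (a * c + b * d) ^ 2 + 1 := by
    linear_combination (a * d - b * c + 1) * hu
  have hrne : r ≠ 0 := by
    intro h0
    rw [hkr, h0] at lag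
    have hdvd : (a ^ 2 + b ^ 2) ∣ 1 := ⟨c ^ 2 + d ^ 2, by linarith [lag]⟩
    have := Int.le_of_dvd one_pos hdvd
    omega
  have hr1 : 1 ≤ r := by omega
  have lag2 : (a ^ 2 + b ^ 2) * ((a - c) ^ 2 + (b - d) ^ 2)
      = ((a ^ 2 + b ^ 2) - (a * c + b * d)) ^ 2 + 1 := by
    linear_combination (a * d - b * c + 1) * hu
  have hcond1 : c ^ 2 + d ^ 2 < a ^ 2 + b ^ 2 := by
    have hsq : r ^ 2 ≤ (a ^ 2 + b ^ 2 - 1) ^ 2 := pow_le_pow_left₀ hr0 (by omega) 2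
    rw [hkr] at lag
    nlinarith [lag, hsq]
  have hcond2 : (a - c) ^ 2 + (b - d) ^ 2 < a ^ 2 + b ^ 2 := by
    have hsq : (a ^ 2 + b ^ 2 - r) ^ 2 ≤ (a ^ 2 + b ^ 2 - 1) ^ 2 :=
      pow_le_pow_left₀ (by omega) (by omega) 2
    rw [hkr] at lag2
    nlinarith [lag2, hsq]
  refine ⟨(c, d), ⟨hu, hcond1, hcond2⟩, ?_⟩
  rintro ⟨c', d'⟩ ⟨hu', h1', h2'⟩
  dsimp only at hu' h1' h2'
  obtain ⟨hk'pos, hk'lt⟩ := key c' d' hu' h1' h2'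
  obtain ⟨hkpos, hklt⟩ := key c d hu hcond1 hcond2
  have hdvd : a ∣ b * (c' - c) := ⟨d' - d, by linear_combination hu - hu'⟩
  obtain ⟨s, hs⟩ := hco.dvd_of_dvd_mul_left hdvd
  have hds : d' - d = b * s := by
    have h : a * (d' - d) = a * (b * s) := by linear_combination hu' - hu + b * hs
    exact mul_left_cancel₀ ha h
  have hks : (a * c' + b * d') - (a * c + b * d) = (a ^ 2 + b ^ 2) * s := by
    linear_combination a * hs + b * hds
  have hs0 : s = 0 := by
    rcases lt_trichotomy s 0 with h | h | h
    · exfalso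
      have : (a ^ 2 + b ^ 2) * s ≤ (a ^ 2 + b ^ 2) * (-1) :=
        mul_le_mul_of_nonneg_left (by omega) hNpos.le
      linarith
    · exact h
    · exfalso
      have : (a ^ 2 + b ^ 2) * 1 ≤ (a ^ 2 + b ^ 2) * s :=
        mul_le_mul_of_nonneg_left (by omega) hNpos.le
      linarith
  rw [hs0, mul_zero] at hs
  have hcc : c' = c := by omega
  have hdd : d' = d := by
    rw [hs0, mul_zero] at hds
    omega
  simp [hcc, hdd]
end

section
/- Let χ : ℤ² × ℤ² → ℤ be the bilinear form χ((a,b),(c,d)) = −ac − ad − bd. Suppose v, v⁺, v⁻ ∈ ℤ² satisfy v = v⁺ + v⁻, v⁻₁·v⁺₂ − v⁻₂·v⁺₁ = 1, |v⁺|² < |v|², |v⁻|² < |v|² (Euclidean norms), and χ(v, v) < −3. Then χ(v⁺, v⁻) < 0. -/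
lemma aux16 (a b : ℤ) (h : ¬(a = 0 ∧ b = 0)) : 1 ≤ a ^ 2 + a * b + b ^ 2 := by
  rcases lt_or_ge 0 (a ^ 2 + a * b + b ^ 2) with h1 | h1
  · omega
  · exfalso
    have hb2 : b ^ 2 ≤ 0 := by nlinarith [sq_nonneg (2 * a + b)]
    have hb : b = 0 := by nlinarith [sq_nonneg b]
    have ha2 : a ^ 2 ≤ 0 := by nlinarith
    have ha : a = 0 := by nlinarith [sq_nonneg a]
    exact h ⟨ha, hb⟩

theorem stmt16 (v vp vm : ℤ × ℤ) (hsum : v = vp + vm)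
    (hwedge : vm.1 * vp.2 - vm.2 * vp.1 = 1)
    (hp : vp.1 ^ 2 + vp.2 ^ 2 < v.1 ^ 2 + v.2 ^ 2)
    (hm : vm.1 ^ 2 + vm.2 ^ 2 < v.1 ^ 2 + v.2 ^ 2)
    (hv : chi v v < -3) :
    chi vp vm < 0 := by
  obtain ⟨a, b⟩ := vp
  obtain ⟨c, d⟩ := vm
  subst hsum
  simp only [chi, Prod.fst_add, Prod.snd_add] at hp hm hv ⊢
  have hw2 : b * c - a * d = 1 := by linear_combination hwedge
  -- Euclidean norm inequalities
  have h1 : (1:ℤ) ≤ 2 * (a * c + b * d) + c ^ 2 + d ^ 2 := by nlinarith [hp]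
  have h2 : (1:ℤ) ≤ 2 * (a * c + b * d) + a ^ 2 + b ^ 2 := by nlinarith [hm]
  -- Lagrange identity
  have hid : (a ^ 2 + b ^ 2) * (c ^ 2 + d ^ 2) = (a * c + b * d) ^ 2 + 1 := by
    linear_combination (b * c - a * d + 1) * hw2
  -- the Euclidean inner product is nonnegative
  have hS : 0 ≤ a * c + b * d := by
    by_contra h
    push_neg at h
    have h' : a * c + b * d ≤ -1 := by omega
    nlinarith [mul_nonneg (by linarith : (0:ℤ) ≤ 2 * (a * c + b * d) + c ^ 2 + d ^ 2 - 1)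
        (by linarith : (0:ℤ) ≤ 2 * (a * c + b * d) + a ^ 2 + b ^ 2 - 1), hid,
      mul_nonneg (by linarith : (0:ℤ) ≤ a ^ 2 + b ^ 2 - (1 - 2 * (a * c + b * d)))
        (by linarith : (0:ℤ) ≤ 1 - 2 * (a * c + b * d)),
      mul_nonneg (by linarith : (0:ℤ) ≤ c ^ 2 + d ^ 2 - (1 - 2 * (a * c + b * d)))
        (by linarith : (0:ℤ) ≤ 1 - 2 * (a * c + b * d)), sq_nonneg (a * c + b * d)]
  -- bound on b*c
  have hbc : -(a * c + b * d) - 1 ≤ b * c := by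
    by_contra h
    push_neg at h
    have h' : b * c ≤ -(a * c + b * d) - 2 := by omega
    nlinarith [hid, sq_nonneg (a * c), sq_nonneg (a * d), sq_nonneg (b * d),
      mul_nonneg (by linarith : (0:ℤ) ≤ -(b * c) - (a * c + b * d) - 2)
        (by linarith : (0:ℤ) ≤ -(b * c) + (a * c + b * d) + 2)]
  -- identity for the positive definite form
  have hid2 : (a ^ 2 + a * b + b ^ 2) * (c ^ 2 + c * d + d ^ 2)
      = (a * c + b * d + b * c) ^ 2 - (a * c + b * d + b * c) + 1 := by
    linear_combination (-(a * c) - a * d - b * d + 1) * hw2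
  have hQp : 1 ≤ a ^ 2 + a * b + b ^ 2 := by
    refine aux16 a b ?_
    rintro ⟨rfl, rfl⟩
    simp at hwedge
  have hQm : 1 ≤ c ^ 2 + c * d + d ^ 2 := by
    refine aux16 c d ?_
    rintro ⟨rfl, rfl⟩
    simp at hwedge
  -- from hv : Qp + Qm + 2N - 1 ≥ 4
  have hsum5 : 5 ≤ (a ^ 2 + a * b + b ^ 2) + (c ^ 2 + c * d + d ^ 2)
      + 2 * (a * c + b * d + b * c) := by nlinarith [hv, hw2]
  by_contra hg
  push_neg at hg
  -- hg : 0 ≤ chi vp vm = 1 - N, so N ≤ 1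
  have hN1 : a * c + b * d + b * c ≤ 1 := by linarith [hw2, hg]
  have hNm1 : -1 ≤ a * c + b * d + b * c := by linarith [hS, hbc]
  nlinarith [hid2, mul_nonneg (by linarith : (0:ℤ) ≤ a ^ 2 + a * b + b ^ 2 - 1)
      (by linarith : (0:ℤ) ≤ c ^ 2 + c * d + d ^ 2 - 1),
    mul_nonpos_of_nonneg_of_nonpos (by linarith : (0:ℤ) ≤ a * c + b * d + b * c + 1)
      (by linarith : a * c + b * d + b * c - 1 ≤ 0)]
end
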